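/- If r is the Gauss remainder of nonzero a, b ∈ ℤ[i], if r ≠ 0, and if v₂(r) ≤ v₂(b), then φ(r) < φ(b). -/

import Mathlib

open GaussianInt

noncomputable section

/-- The sequence w: w_{2k} = 3·2^k, w_{2k+1} = 4·2^k. -/
def w (n : ℕ) : ℤ := if n % 2 = 0 then 3 * 2 ^ (n / 2) else 4 * 2 ^ (n / 2)

/-- 2-adic valuation of gcd(Re z, Im z). -/
def v2 (z : GaussianInt) : ℕ := padicValNat 2 (Int.gcd z.re z.im)

/-- ℓ₁ norm. -/
def l1 (z : GaussianInt) : ℤ := |z.re| + |z.im|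

/-- ℓ∞ norm. -/
def linf (z : GaussianInt) : ℤ := max |z.re| |z.im|

/-- m(z) = min(|Re z|, |Im z|). -/
def mm (z : GaussianInt) : ℤ := min |z.re| |z.im|

/-- The algebraic norm. -/
def Nm (z : GaussianInt) : ℤ := z.re ^ 2 + z.im ^ 2

/-- Graves' formula for the minimal Euclidean function φ on ℤ[i]. -/
def phi (z : GaussianInt) : ℕ :=
  let j := v2 z
  let n := sInf {n : ℕ | |z.re| ≤ 2 ^ j * (w n - 2) ∧ |z.im| ≤ 2 ^ j * (w n - 2)}
  if l1 z ≤ 2 ^ j * (w (n + 1) - 3) then n + 2 * j else n + 2 * j + 1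

/-- Nearest integer, rounding halves down. -/
def nint (x : ℚ) : ℤ := if x - ⌊x⌋ ≤ 1 / 2 then ⌊x⌋ else ⌈x⌉

/-- Gauss quotient: coordinatewise nearest-integer rounding of a·conj(b)/Nm(b). -/
def gq (a b : GaussianInt) : GaussianInt :=
  ⟨nint (((a.re * b.re + a.im * b.im : ℤ) : ℚ) / ((b.re ^ 2 + b.im ^ 2 : ℤ) : ℚ)),
   nint (((a.im * b.re - a.re * b.im : ℤ) : ℚ) / ((b.re ^ 2 + b.im ^ 2 : ℤ) : ℚ))⟩

/-- Gauss remainder. -/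
def gr (a b : GaussianInt) : GaussianInt := a - gq a b * b

/-- The imaginary unit in ℤ[i]. -/
def Ii : GaussianInt := ⟨0, 1⟩

/-- The canonical unit u_z. -/
def uz (z : GaussianInt) : GaussianInt :=
  if |z.re| > |z.im| then (if 0 < z.re then 1 else -1)
  else if |z.im| > |z.re| then (if 0 < z.im then -Ii else Ii)
  else if 0 < z.re then (if 0 < z.im then 1 else Ii)
  else (if 0 < z.im then -Ii else -1)

/-- s(z) = sgn(Im(u_z·z)). -/
def sfun (z : GaussianInt) : ℤ := Int.sign ((uz z * z).im)

/-!
Write `r = θ b` with `θ` in the square `[-1/2, 1/2]²`. Then `2 ‖r‖∞ ≤ ‖b‖₁` and `‖r‖₁ ≤ ‖b‖∞`.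
Once the common factor `2 ^ v₂(r)` is divided out, these two inequalities turn the octagon
bounds that define `φ(b)` into the octagon bounds one level lower for `r`, so `φ(r) ≤ φ(b) - 1`
(at the lowest level, `b / 2 ^ v₂(b)` is a unit and `2 ‖r‖∞ ≤ ‖b‖₁` forces `r = 0`).
The `ℓ∞` bound has room to spare; the `ℓ₁` bound could only fail when `v₂(r) = v₂(b)`,
`‖b‖∞ / 2 ^ v₂(b)` is even and `‖r‖₁ = ‖b‖∞`.
Equality in `‖r‖₁ ≤ ‖b‖∞` forces `θ = (±1 ± i) / 2`, hence `2 Nm r = Nm b`. This is impossible: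
`b / 2 ^ v₂(b)` has one even and one odd coordinate, so `Nm b / 4 ^ v₂(b)` is odd, while
`4 ^ v₂(b)` divides `Nm r`.
-/

lemma w_add_two (n : ℕ) : w (n + 2) = 2 * w n := by
  have hmod : (n + 2) % 2 = n % 2 := by omega
  have hdiv : (n + 2) / 2 = n / 2 + 1 := by omega
  simp only [w, hmod, hdiv, pow_succ]
  split <;> ring

lemma w_add_two_mul (n d : ℕ) : w (n + 2 * d) = 2 ^ d * w n := by
  induction d with
  | zero => simp
  | succ d ih => rw [mul_add_one, ← add_assoc, w_add_two, ih, pow_succ]; ring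

lemma w_two_mul (k : ℕ) : w (2 * k) = 3 * 2 ^ k := by
  rw [← zero_add (2 * k), w_add_two_mul]; simp [w, mul_comm]

lemma w_two_mul_add_one (k : ℕ) : w (2 * k + 1) = 4 * 2 ^ k := by
  rw [add_comm, w_add_two_mul]; simp [w, mul_comm]

lemma w_lt_w_add_one (n : ℕ) : w n < w (n + 1) := by
  obtain ⟨k, rfl | rfl⟩ := Nat.even_or_odd' n
  · rw [w_two_mul, w_two_mul_add_one]; linarith [pow_pos (two_pos : (0 : ℤ) < 2) k]
  · rw [show 2 * k + 1 + 1 = 2 * (k + 1) by ring, w_two_mul, w_two_mul_add_one, pow_succ]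
    linarith [pow_pos (two_pos : (0 : ℤ) < 2) k]

lemma w_strictMono : StrictMono w := strictMono_nat_of_lt_succ w_lt_w_add_one

lemma natCast_add_three_le_w (n : ℕ) : (n : ℤ) + 3 ≤ w n := by
  induction n with
  | zero => simp [w]
  | succ n ih => have := w_lt_w_add_one n; push_cast; omega

lemma two_dvd_w {n : ℕ} (hn : n ≠ 0) : 2 ∣ w n := by
  obtain ⟨k, rfl | rfl⟩ := Nat.even_or_odd' n
  · obtain ⟨k, rfl⟩ := Nat.exists_eq_succ_of_ne_zero (by omega : k ≠ 0)
    exact ⟨3 * 2 ^ k, by rw [w_two_mul, pow_succ]; ring⟩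
  · exact ⟨2 * 2 ^ k, by rw [w_two_mul_add_one]; ring⟩

section Scaling

variable (c : ℤ) (z : GaussianInt)

@[simp] lemma re_intCast_mul : ((c : GaussianInt) * z).re = c * z.re := by simp [Zsqrtd.re_mul]

@[simp] lemma im_intCast_mul : ((c : GaussianInt) * z).im = c * z.im := by simp [Zsqrtd.im_mul]

lemma l1_intCast_mul : l1 (c * z) = |c| * l1 z := by simp [l1, abs_mul, mul_add]

lemma linf_intCast_mul : linf (c * z) = |c| * linf z := by
  simp [linf, abs_mul, mul_max_of_nonneg _ _ (abs_nonneg c)]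

lemma Nm_intCast_mul : Nm (c * z) = c ^ 2 * Nm z := by
  simp only [Nm, re_intCast_mul, im_intCast_mul]; ring

end Scaling

lemma linf_pos {z : GaussianInt} (hz : z ≠ 0) : 0 < linf z := by
  by_contra! h
  exact hz (Zsqrtd.ext (abs_nonpos_iff.1 ((le_max_left _ _).trans h))
    (abs_nonpos_iff.1 ((le_max_right _ _).trans h)))

lemma exists_eq_two_pow_v2_mul {z : GaussianInt} (hz : z ≠ 0) :
    ∃ z' : GaussianInt, z = ((2 ^ v2 z : ℤ) : GaussianInt) * z' ∧ ¬(2 ∣ z'.re ∧ 2 ∣ z'.im) := by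
  have hg : Int.gcd z.re z.im ≠ 0 := fun h =>
    hz (Zsqrtd.ext (Int.gcd_eq_zero_iff.1 h).1 (Int.gcd_eq_zero_iff.1 h).2)
  have hdvd : (2 : ℤ) ^ v2 z ∣ Int.gcd z.re z.im := by exact_mod_cast pow_padicValNat_dvd
  obtain ⟨x, hx⟩ := hdvd.trans (Int.gcd_dvd_left z.re z.im)
  obtain ⟨y, hy⟩ := hdvd.trans (Int.gcd_dvd_right z.re z.im)
  refine ⟨⟨x, y⟩, Zsqrtd.ext (by rw [re_intCast_mul]; exact hx) (by rw [im_intCast_mul]; exact hy),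
    ?_⟩
  rintro ⟨⟨x', rfl⟩, ⟨y', rfl⟩⟩
  have hre : (2 : ℤ) ^ (v2 z + 1) ∣ z.re := ⟨x', by rw [hx, pow_succ]; ring⟩
  have him : (2 : ℤ) ^ (v2 z + 1) ∣ z.im := ⟨y', by rw [hy, pow_succ]; ring⟩
  apply pow_succ_padicValNat_not_dvd (p := 2) hg
  exact_mod_cast Int.dvd_gcd hre him

lemma l1_le_two_mul_linf (z : GaussianInt) : l1 z ≤ 2 * linf z := by
  simp only [l1, linf]; linarith [le_max_left |z.re| |z.im|, le_max_right |z.re| |z.im|]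

lemma phi_le_iff (z : GaussianInt) (m : ℕ) :
    phi z ≤ m ↔ 2 * v2 z ≤ m ∧ linf z ≤ 2 ^ v2 z * (w (m - 2 * v2 z) - 2) ∧
      l1 z ≤ 2 ^ v2 z * (w (m - 2 * v2 z + 1) - 3) := by
  set j := v2 z
  set S := {n : ℕ | |z.re| ≤ 2 ^ j * (w n - 2) ∧ |z.im| ≤ 2 ^ j * (w n - 2)}
  have hmem (n : ℕ) : n ∈ S ↔ linf z ≤ 2 ^ j * (w n - 2) := max_le_iff.symm
  have hS : sInf S ∈ S := by
    refine Nat.sInf_mem ⟨(linf z).toNat, (hmem _).2 ?_⟩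
    have := natCast_add_three_le_w (linf z).toNat
    have := Int.self_le_toNat (linf z)
    have : (1 : ℤ) ≤ 2 ^ j := one_le_pow₀ one_le_two
    nlinarith
  have hphi : phi z = if l1 z ≤ 2 ^ j * (w (sInf S + 1) - 3) then sInf S + 2 * j
      else sInf S + 2 * j + 1 := rfl
  rw [hphi]
  constructor
  · intro h
    have hle : sInf S + 2 * j ≤ m := by split_ifs at h <;> omega
    have hw := w_strictMono.monotone (show sInf S ≤ m - 2 * j by omega)
    refine ⟨by omega, ((hmem _).1 hS).trans (by gcongr), ?_⟩
    by_cases heq : sInf S + 2 * j = m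
    · split_ifs at h with hl1
      · rwa [show m - 2 * j + 1 = sInf S + 1 by omega]
      · omega
    · have hw2 := w_strictMono.monotone (show sInf S + 2 ≤ m - 2 * j + 1 by omega)
      calc l1 z ≤ 2 * linf z := l1_le_two_mul_linf z
        _ ≤ 2 * (2 ^ j * (w (sInf S) - 2)) := by linarith [(hmem _).1 hS]
        _ = 2 ^ j * (w (sInf S + 2) - 4) := by rw [w_add_two]; ring
        _ ≤ 2 ^ j * (w (m - 2 * j + 1) - 3) := by gcongr; linarith
  · rintro ⟨hjm, hlinf, hl1⟩
    have hle : sInf S ≤ m - 2 * j := Nat.sInf_le ((hmem _).2 hlinf)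
    split_ifs with h
    · omega
    · have : sInf S ≠ m - 2 * j := fun heq => h (heq ▸ hl1)
      omega

lemma two_mul_v2_le_phi (z : GaussianInt) : 2 * v2 z ≤ phi z :=
  ((phi_le_iff z _).1 le_rfl).1

def InOctagon (z : GaussianInt) (n : ℕ) : Prop :=
  linf z ≤ w n - 2 ∧ l1 z ≤ w (n + 1) - 3

lemma phi_le_two_mul_v2_add_iff {z z' : GaussianInt}
    (hz : z = ((2 ^ v2 z : ℤ) : GaussianInt) * z') (n : ℕ) :
    phi z ≤ 2 * v2 z + n ↔ InOctagon z' n := by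
  have hlinf : linf z = 2 ^ v2 z * linf z' := by
    conv_lhs => rw [hz]
    rw [linf_intCast_mul, abs_pow, abs_two]
  have hl1 : l1 z = 2 ^ v2 z * l1 z' := by
    conv_lhs => rw [hz]
    rw [l1_intCast_mul, abs_pow, abs_two]
  have hj : (0 : ℤ) < 2 ^ v2 z := by positivity
  rw [phi_le_iff, Nat.add_sub_cancel_left, hlinf, hl1, mul_le_mul_iff_right₀ hj,
    mul_le_mul_iff_right₀ hj, InOctagon]
  simp

lemma max_abs_add_abs_sub (a b : ℤ) : max |a + b| |a - b| = |a| + |b| := by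
  simp only [abs_eq_max_neg]; omega

lemma abs_add_add_abs_sub (a b : ℤ) : |a + b| + |a - b| = 2 * max |a| |b| := by
  simp only [abs_eq_max_neg]; omega

section SharpBound

variable {P Q N : ℤ}

lemma two_mul_abs_mul_add_mul_le (hP : 2 * |P| ≤ N) (hQ : 2 * |Q| ≤ N) (s t : ℤ) :
    2 * |P * s + Q * t| ≤ N * (|s| + |t|) := by
  have := abs_add_le (P * s) (Q * t)
  rw [abs_mul, abs_mul] at this
  nlinarith [abs_nonneg s, abs_nonneg t]

lemma two_mul_abs_eq_of_two_mul_abs_mul_add_mul_eq (hP : 2 * |P| ≤ N) (hQ : 2 * |Q| ≤ N)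
    {s t : ℤ} (hs : s ≠ 0) (ht : t ≠ 0) (h : 2 * |P * s + Q * t| = N * (|s| + |t|)) :
    2 * |P| = N ∧ 2 * |Q| = N := by
  have := abs_add_le (P * s) (Q * t)
  rw [abs_mul, abs_mul] at this
  have hs' := abs_pos.2 hs
  have ht' := abs_pos.2 ht
  constructor <;> nlinarith [abs_nonneg s, abs_nonneg t]

end SharpBound

lemma Nm_eq_norm (z : GaussianInt) : Nm z = z.norm := by
  rw [Nm, Zsqrtd.norm_def]; ring

lemma Nm_pos {y : GaussianInt} (hy : y ≠ 0) : 0 < Nm y :=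
  Nm_eq_norm y ▸ GaussianInt.norm_pos.2 hy

lemma Nm_mul_re (y z : GaussianInt) :
    Nm y * z.re = (z * star y).re * y.re + (z * star y).im * -y.im := by
  simp only [Nm, Zsqrtd.re_mul, Zsqrtd.im_mul, Zsqrtd.re_star, Zsqrtd.im_star]; ring

lemma Nm_mul_im (y z : GaussianInt) :
    Nm y * z.im = (z * star y).re * y.im + (z * star y).im * y.re := by
  simp only [Nm, Zsqrtd.re_mul, Zsqrtd.im_mul, Zsqrtd.re_star, Zsqrtd.im_star]; ring

lemma Nm_mul_l1 (y z : GaussianInt) :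
    Nm y * l1 z = max |(z * star y).re * (y.re + y.im) + (z * star y).im * (y.re - y.im)|
      |(z * star y).re * (y.re - y.im) + (z * star y).im * -(y.re + y.im)| := by
  have hN : 0 ≤ Nm y := Nm_eq_norm y ▸ GaussianInt.norm_nonneg y
  rw [l1, mul_add, ← abs_of_nonneg hN, ← abs_mul, ← abs_mul, ← max_abs_add_abs_sub, Nm_mul_re,
    Nm_mul_im]
  congr 2 <;> ring

lemma two_dvd_re_and_im_of_two_dvd_linf_Nm {y : GaussianInt} (hl : 2 ∣ linf y)
    (hN : 2 ∣ Nm y) : 2 ∣ y.re ∧ 2 ∣ y.im := by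
  rw [Nm] at hN
  rcases max_choice |y.re| |y.im| with h | h <;> rw [linf, h, dvd_abs] at hl
  · exact ⟨hl, Int.prime_two.dvd_of_dvd_pow ((dvd_add_right (dvd_pow hl two_ne_zero)).1 hN)⟩
  · exact ⟨Int.prime_two.dvd_of_dvd_pow ((dvd_add_left (dvd_pow hl two_ne_zero)).1 hN), hl⟩

lemma abs_re_ne_abs_im_of_not_two_dvd_Nm {y : GaussianInt} (hN : ¬2 ∣ Nm y) :
    |y.re| ≠ |y.im| := by
  intro h
  apply hN
  rw [Nm, ← sq_abs y.re, h, sq_abs]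
  exact ⟨y.im ^ 2, by ring⟩

/-- `z / y` lies in the closed square `[-1/2, 1/2]²`; since `z / y = z * conj y / Nm y`, this
is stated without division. -/
def InHalfSquare (z y : GaussianInt) : Prop :=
  2 * |(z * star y).re| ≤ Nm y ∧ 2 * |(z * star y).im| ≤ Nm y

lemma inHalfSquare_intCast_mul_iff {c : ℤ} (hc : c ≠ 0) (z y : GaussianInt) :
    InHalfSquare (c * z) (c * y) ↔ InHalfSquare z y := by
  have hc2 : 0 < c ^ 2 := by positivity
  have hmul : (c : GaussianInt) * z * star ((c : GaussianInt) * y) =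
      ((c ^ 2 : ℤ) : GaussianInt) * (z * star y) := by
    rw [star_mul', star_intCast]; push_cast; ring
  simp only [InHalfSquare, hmul, re_intCast_mul, im_intCast_mul, Nm_intCast_mul, abs_mul,
    abs_of_pos hc2, mul_left_comm 2 (c ^ 2), mul_le_mul_iff_right₀ hc2]

namespace InHalfSquare

variable {z y : GaussianInt}

lemma two_mul_linf_le_l1 (h : InHalfSquare z y) (hy : y ≠ 0) : 2 * linf z ≤ l1 y := by
  have hN := Nm_pos hy
  have hre : Nm y * (2 * |z.re|) ≤ Nm y * l1 y :=
    calc Nm y * (2 * |z.re|) = 2 * |Nm y * z.re| := by rw [abs_mul, abs_of_pos hN]; ring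
      _ ≤ Nm y * (|y.re| + |-y.im|) := by
        rw [Nm_mul_re]; exact two_mul_abs_mul_add_mul_le h.1 h.2 _ _
      _ = Nm y * l1 y := by rw [abs_neg, l1]
  have him : Nm y * (2 * |z.im|) ≤ Nm y * l1 y :=
    calc Nm y * (2 * |z.im|) = 2 * |Nm y * z.im| := by rw [abs_mul, abs_of_pos hN]; ring
      _ ≤ Nm y * (|y.im| + |y.re|) := by
        rw [Nm_mul_im]; exact two_mul_abs_mul_add_mul_le h.1 h.2 _ _
      _ = Nm y * l1 y := by rw [add_comm, l1]
  rw [linf, mul_max_of_nonneg _ _ zero_le_two]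
  exact max_le (le_of_mul_le_mul_left hre hN) (le_of_mul_le_mul_left him hN)

lemma l1_le_linf (h : InHalfSquare z y) (hy : y ≠ 0) : l1 z ≤ linf y := by
  have hs := two_mul_abs_mul_add_mul_le h.1 h.2 (y.re + y.im) (y.re - y.im)
  have ht := two_mul_abs_mul_add_mul_le h.1 h.2 (y.re - y.im) (-(y.re + y.im))
  rw [abs_neg, add_comm |y.re - y.im|] at ht
  rw [abs_add_add_abs_sub] at hs ht
  have : 2 * (Nm y * l1 z) ≤ Nm y * (2 * linf y) := by
    rw [Nm_mul_l1, mul_max_of_nonneg _ _ zero_le_two, linf]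
    exact max_le hs ht
  nlinarith [Nm_pos hy]

lemma two_mul_Nm_eq_of_l1_eq_linf (h : InHalfSquare z y) (hy : y ≠ 0) (hl : l1 z = linf y)
    (hne : |y.re| ≠ |y.im|) : 2 * Nm z = Nm y := by
  have hN := Nm_pos hy
  have hs : y.re + y.im ≠ 0 := fun h0 => hne (by rw [eq_neg_of_add_eq_zero_left h0, abs_neg])
  have ht : y.re - y.im ≠ 0 := fun h0 => hne (by rw [sub_eq_zero.1 h0])
  -- equality forces `|re (z * conj y)| = |im (z * conj y)| = Nm y / 2`, i.e. `z / y = (±1 ± i) / 2`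
  have hmax : 2 * (Nm y * l1 z) = Nm y * (|y.re + y.im| + |y.re - y.im|) := by
    rw [abs_add_add_abs_sub, hl, linf]; ring
  obtain ⟨hP, hQ⟩ : 2 * |(z * star y).re| = Nm y ∧ 2 * |(z * star y).im| = Nm y := by
    rw [Nm_mul_l1] at hmax
    rcases max_choice |(z * star y).re * (y.re + y.im) + (z * star y).im * (y.re - y.im)|
      |(z * star y).re * (y.re - y.im) + (z * star y).im * -(y.re + y.im)| with hc | hc <;>
      rw [hc] at hmax
    · refine two_mul_abs_eq_of_two_mul_abs_mul_add_mul_eq h.1 h.2 hs ht ?_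
      rw [mul_add] at hmax ⊢; linarith
    · refine two_mul_abs_eq_of_two_mul_abs_mul_add_mul_eq h.1 h.2 ht (neg_ne_zero.2 hs) ?_
      rw [abs_neg]; linarith
  have hnorm : Nm z * Nm y = (z * star y).re ^ 2 + (z * star y).im ^ 2 := by
    rw [Nm_eq_norm, Nm_eq_norm, ← Zsqrtd.norm_conj y, ← Zsqrtd.norm_mul, ← Nm_eq_norm, Nm]
  have h4 : 4 * (Nm z * Nm y) = 2 * (Nm y * Nm y) := by
    rw [hnorm, ← sq_abs (z * star y).re, ← sq_abs (z * star y).im]; nlinarith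
  nlinarith

lemma l1_ne_linf (h : InHalfSquare z y)
    (hy : ¬(2 ∣ y.re ∧ 2 ∣ y.im)) (hl : 2 ∣ linf y) : l1 z ≠ linf y := by
  intro heq
  have hN : ¬2 ∣ Nm y := fun hN => hy (two_dvd_re_and_im_of_two_dvd_linf_Nm hl hN)
  have hy0 : y ≠ 0 := by rintro rfl; exact hy ⟨dvd_zero 2, dvd_zero 2⟩
  have hne := abs_re_ne_abs_im_of_not_two_dvd_Nm hN
  exact hN ⟨Nm z, (h.two_mul_Nm_eq_of_l1_eq_linf hy0 heq hne).symm⟩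

lemma inOctagon_pred {d k : ℕ}
    (h : InHalfSquare z ((2 ^ d : ℤ) * y)) (hz : z ≠ 0) (hy : ¬(2 ∣ y.re ∧ 2 ∣ y.im))
    (hk : InOctagon y k) : k + 2 * d ≠ 0 ∧ InOctagon z (k + 2 * d - 1) := by
  obtain ⟨hlinf, hl1⟩ := hk
  have hy0 : ((2 ^ d : ℤ) : GaussianInt) * y ≠ 0 := by
    rintro h0
    apply hy
    rw [mul_eq_zero, Int.cast_eq_zero] at h0
    simp [h0.resolve_left (by positivity)]
  have hlinf_z := h.two_mul_linf_le_l1 hy0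
  have hl1_z := h.l1_le_linf hy0
  rw [l1_intCast_mul, abs_pow, abs_two] at hlinf_z
  rw [linf_intCast_mul, abs_pow, abs_two] at hl1_z
  have hD : (1 : ℤ) ≤ 2 ^ d := one_le_pow₀ one_le_two
  have hn : k + 2 * d ≠ 0 := by
    rintro hn
    obtain ⟨rfl, rfl⟩ : k = 0 ∧ d = 0 := by omega
    have : w 1 = 4 := rfl
    linarith [linf_pos hz]
  refine ⟨hn, ?_, ?_⟩
  · have hw : w (k + 2 * d - 1 + 2) = 2 ^ d * w (k + 1) := by
      rw [show k + 2 * d - 1 + 2 = k + 1 + 2 * d by omega, w_add_two_mul]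
    rw [w_add_two] at hw
    nlinarith
  · rw [Nat.sub_add_cancel (by omega), w_add_two_mul]
    rcases Nat.eq_zero_or_pos d with rfl | hd
    · simp only [pow_zero, Int.cast_one, one_mul] at h hl1_z ⊢
      by_contra hgt
      have heq : l1 z = linf y := by omega
      have hlinf_eq : linf y = w k - 2 := by omega
      exact h.l1_ne_linf hy (hlinf_eq ▸ dvd_sub (two_dvd_w (by omega)) dvd_rfl) heq
    · have : (2 : ℤ) ≤ 2 ^ d := le_self_pow₀ one_le_two (by omega)
      nlinarith

end InHalfSquare

lemma abs_sub_nint_le (x : ℚ) : |x - nint x| ≤ 1 / 2 := by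
  have hfloor := Int.floor_le x
  have hceil : (⌈x⌉ : ℚ) ≤ ⌊x⌋ + 1 := by exact_mod_cast Int.ceil_le_floor_add_one x
  unfold nint
  split_ifs with h
  · rw [abs_le]; constructor <;> linarith
  · rw [abs_le]; constructor <;> linarith [Int.le_ceil x]

lemma two_mul_abs_sub_nint_mul_le (x : ℤ) {n : ℤ} (hn : 0 < n) :
    2 * |x - nint ((x : ℚ) / n) * n| ≤ n := by
  have hnq : (0 : ℚ) < n := by exact_mod_cast hn
  have h := abs_sub_nint_le ((x : ℚ) / n)
  have heq :
      ((x - nint ((x : ℚ) / n) * n : ℤ) : ℚ) = ((x : ℚ) / n - nint ((x : ℚ) / n)) * n := by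
    push_cast; field_simp
  have : 2 * |((x - nint ((x : ℚ) / n) * n : ℤ) : ℚ)| ≤ n := by
    rw [heq, abs_mul, abs_of_pos hnq]; nlinarith [abs_nonneg ((x : ℚ) / n - nint ((x : ℚ) / n))]
  exact_mod_cast this

lemma gr_inHalfSquare (a : GaussianInt) {b : GaussianInt} (hb : b ≠ 0) :
    InHalfSquare (gr a b) b := by
  have hN := Nm_pos hb
  have hre : (gr a b * star b).re = (a.re * b.re + a.im * b.im) - (gq a b).re * Nm b := by
    simp only [gr, Nm, sub_mul, Zsqrtd.re_sub, Zsqrtd.re_mul, Zsqrtd.im_mul, Zsqrtd.re_star,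
      Zsqrtd.im_star]
    ring
  have him : (gr a b * star b).im = (a.im * b.re - a.re * b.im) - (gq a b).im * Nm b := by
    simp only [gr, Nm, sub_mul, Zsqrtd.im_sub, Zsqrtd.re_mul, Zsqrtd.im_mul, Zsqrtd.re_star,
      Zsqrtd.im_star]
    ring
  rw [InHalfSquare, hre, him]
  exact ⟨two_mul_abs_sub_nint_mul_le _ hN, two_mul_abs_sub_nint_mul_le _ hN⟩

lemma phi_lt_of_inHalfSquare {z y : GaussianInt} (h : InHalfSquare z y) (hz : z ≠ 0)
    (hy : y ≠ 0) (hv : v2 z ≤ v2 y) : phi z < phi y := by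
  obtain ⟨z', hz', -⟩ := exists_eq_two_pow_v2_mul hz
  obtain ⟨y', hy', hprim⟩ := exists_eq_two_pow_v2_mul hy
  obtain ⟨d, hd⟩ := Nat.exists_eq_add_of_le hv
  obtain ⟨k, hk⟩ := Nat.exists_eq_add_of_le (two_mul_v2_le_phi y)
  have hsq : InHalfSquare z' ((2 ^ d : ℤ) * y') := by
    rw [hz', hy', hd, pow_add, Int.cast_mul, mul_assoc] at h
    exact (inHalfSquare_intCast_mul_iff (by positivity) _ _).1 h
  have hz'0 : z' ≠ 0 := by rintro rfl; exact hz (by rw [hz', mul_zero])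
  obtain ⟨hn, hoct⟩ :=
    hsq.inOctagon_pred hz'0 hprim ((phi_le_two_mul_v2_add_iff hy' k).1 hk.le)
  have := (phi_le_two_mul_v2_add_iff hz' _).2 hoct
  omega

theorem stmt10_general (a b r : GaussianInt) (hb : b ≠ 0) (hr : r = gr a b)
    (hr0 : r ≠ 0) (hv : v2 r ≤ v2 b) :
    phi r < phi b :=
  phi_lt_of_inHalfSquare (hr ▸ gr_inHalfSquare a hb) hr0 hb hv

theorem stmt10 (a b r : GaussianInt) (ha : a ≠ 0) (hb : b ≠ 0) (hr : r = gr a b)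
    (hr0 : r ≠ 0) (hv : v2 r ≤ v2 b) :
    phi r < phi b :=
  stmt10_general a b r hb hr hr0 hv
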